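/- Let A = ℤ⟨x,y⟩/(yx + xy) (the case q = −1). With the ℤ²-grading deg x = (1,0), deg y = (0,1), the graded piece B_k(A)[i,j] for k ≥ 2 is isomorphic to ℤ/2 if i,j > 0, i+j > k, and i,j are not both even; isomorphic to ℤ if i,j > 0, i+j = k, and i,j not both even; and 0 otherwise. -/

import Mathlib

open FreeAlgebra

/-- The defining relation `yx + xy = 0` of `A = ℤ⟨x,y⟩/(yx + xy)`. -/
def negRel : FreeAlgebra ℤ (Fin 2) → FreeAlgebra ℤ (Fin 2) → Prop :=
  fun a b => a = ι ℤ (1 : Fin 2) * ι ℤ (0 : Fin 2) +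
      ι ℤ (0 : Fin 2) * ι ℤ (1 : Fin 2) ∧ b = 0

/-- The algebra `A = ℤ⟨x,y⟩/(yx + xy)`. -/
def NegPoly : Type := RingQuot negRel

noncomputable instance : Ring NegPoly :=
  inferInstanceAs (Ring (RingQuot negRel))

noncomputable instance : Algebra ℤ NegPoly :=
  inferInstanceAs (Algebra ℤ (RingQuot negRel))

/-- The degree-`(i,j)` component of `ℤ⟨x,y⟩`: the span of words with `i`
letters `x` and `j` letters `y`. -/
noncomputable def freeDeg (i j : ℕ) : Submodule ℤ (FreeAlgebra ℤ (Fin 2)) :=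
  Submodule.span ℤ
    {x | ∃ w : List (Fin 2), w.count (0 : Fin 2) = i ∧ w.count (1 : Fin 2) = j ∧
      x = (w.map (ι ℤ)).prod}

/-- The degree-`(i,j)` component of `A = ℤ⟨x,y⟩/(yx + xy)`. -/
noncomputable def nDeg (i j : ℕ) : Submodule ℤ NegPoly :=
  Submodule.map (RingQuot.mkAlgHom ℤ negRel).toLinearMap (freeDeg i j)

/-- The lower central series `L_k` of `A = ℤ⟨x,y⟩/(yx + xy)`
(`lcs k` is `L_k` for `k ≥ 1`; `lcs 0 = ⊤` is a junk value). -/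
noncomputable def lcs : ℕ → Submodule ℤ NegPoly
  | 0 => ⊤
  | 1 => ⊤
  | (k + 2) =>
      Submodule.span ℤ {x | ∃ a l, l ∈ lcs (k + 1) ∧ x = a * l - l * a}

/-- The degree-`(i,j)` component of `B_k(A) = L_k(A)/L_{k+1}(A)`. -/
noncomputable abbrev Bcomp (k i j : ℕ) :=
  ↥(lcs k ⊓ nDeg i j) ⧸
    Submodule.comap (lcs k ⊓ nDeg i j).subtype (lcs (k + 1))

open MvPolynomial

noncomputable def piA : FreeAlgebra ℤ (Fin 2) →ₐ[ℤ] NegPoly := RingQuot.mkAlgHom ℤ negRel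
noncomputable def Xg : NegPoly := piA (ι ℤ (0 : Fin 2))
noncomputable def Yg : NegPoly := piA (ι ℤ (1 : Fin 2))
noncomputable def mon (a b : ℕ) : NegPoly := Xg ^ a * Yg ^ b

lemma yx_eq : Yg * Xg = -(Xg * Yg) := by
  have h : piA (ι ℤ (1 : Fin 2) * ι ℤ (0 : Fin 2) + ι ℤ (0 : Fin 2) * ι ℤ (1 : Fin 2))
      = piA 0 := RingQuot.mkAlgHom_rel ℤ ⟨rfl, rfl⟩
  rw [map_add, map_mul, map_mul, map_zero] at h
  exact eq_neg_of_add_eq_zero_left h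

lemma ypow_x : ∀ b : ℕ, Yg ^ b * Xg = ((-1 : ℤ) ^ b) • (Xg * Yg ^ b) := by
  intro b
  induction b with
  | zero => simp
  | succ n ih =>
    calc Yg ^ (n+1) * Xg = Yg ^ n * (Yg * Xg) := by rw [pow_succ, mul_assoc]
    _ = -(Yg ^ n * Xg * Yg) := by rw [yx_eq, mul_neg, mul_assoc]
    _ = -((((-1 : ℤ) ^ n) • (Xg * Yg ^ n)) * Yg) := by rw [ih]
    _ = ((-1 : ℤ) ^ (n+1)) • (Xg * Yg ^ (n+1)) := by
        rw [smul_mul_assoc, mul_assoc, ← pow_succ, pow_succ ((-1 : ℤ)) n, ← neg_smul]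
        ring_nf

lemma ypow_xpow (a b : ℕ) : Yg ^ b * Xg ^ a = ((-1 : ℤ) ^ (a * b)) • (Xg ^ a * Yg ^ b) := by
  induction a with
  | zero => simp
  | succ n ih =>
    calc Yg ^ b * Xg ^ (n+1) = (Yg ^ b * Xg ^ n) * Xg := by rw [pow_succ, mul_assoc]
    _ = ((-1 : ℤ) ^ (n * b)) • (Xg ^ n * (Yg ^ b * Xg)) := by
        rw [ih, smul_mul_assoc, mul_assoc]
    _ = ((-1 : ℤ) ^ (n * b)) • (Xg ^ n * (((-1 : ℤ) ^ b) • (Xg * Yg ^ b))) := by rw [ypow_x]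
    _ = ((-1 : ℤ) ^ ((n+1) * b)) • (Xg ^ (n+1) * Yg ^ b) := by
        rw [mul_smul_comm, smul_smul, ← pow_add, pow_succ, mul_assoc]
        ring_nf

lemma mon_mul (a b c d : ℕ) :
    mon a b * mon c d = ((-1 : ℤ) ^ (b * c)) • mon (a+c) (b+d) := by
  unfold mon
  calc Xg ^ a * Yg ^ b * (Xg ^ c * Yg ^ d) = Xg ^ a * (Yg ^ b * Xg ^ c) * Yg ^ d := by
        rw [mul_assoc, mul_assoc, mul_assoc]
  _ = Xg ^ a * (((-1 : ℤ) ^ (c * b)) • (Xg ^ c * Yg ^ b)) * Yg ^ d := by rw [ypow_xpow]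
  _ = ((-1 : ℤ) ^ (b * c)) • (Xg ^ (a+c) * Yg ^ (b+d)) := by
      rw [mul_smul_comm, smul_mul_assoc, mul_comm c b, pow_add, pow_add]
      rw [mul_assoc, mul_assoc, mul_assoc]

lemma mon_comm (a b c d : ℕ) :
    mon a b * mon c d - mon c d * mon a b
      = (((-1 : ℤ) ^ (b * c)) - ((-1 : ℤ) ^ (a * d))) • mon (a+c) (b+d) := by
  rw [mon_mul, mon_mul, sub_smul]
  rw [show c + a = a + c from Nat.add_comm c a, show d + b = b + d from Nat.add_comm d b]
  rw [mul_comm d a]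

noncomputable abbrev R2 := MvPolynomial (Fin 2) ℤ
noncomputable abbrev M2 := Matrix (Fin 2) (Fin 2) R2

noncomputable def Smat : M2 := !![0, 1; 1, 0]
noncomputable def Dmat : M2 := !![1, 0; 0, -1]
noncomputable def Xmat : M2 := (X (0 : Fin 2) : R2) • Smat
noncomputable def Ymat : M2 := (X (1 : Fin 2) : R2) • Dmat

lemma anti : Ymat * Xmat + Xmat * Ymat = 0 := by
  unfold Xmat Ymat Smat Dmat
  rw [Matrix.smul_mul, Matrix.mul_smul, Matrix.smul_mul, Matrix.mul_smul]
  ext i j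
  fin_cases i <;> fin_cases j <;>
    simp [Matrix.mul_apply, Fin.sum_univ_two, mul_comm]

lemma Smat_sq : Smat * Smat = 1 := by
  unfold Smat; ext i j; fin_cases i <;> fin_cases j <;>
    simp [Matrix.mul_apply, Fin.sum_univ_two]

lemma Dmat_sq : Dmat * Dmat = 1 := by
  unfold Dmat; ext i j; fin_cases i <;> fin_cases j <;>
    simp [Matrix.mul_apply, Fin.sum_univ_two]

lemma Smat_pow (a : ℕ) : Smat ^ a = if a % 2 = 0 then 1 else Smat := by
  induction a with
  | zero => simp
  | succ n ih =>
    rw [pow_succ, ih]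
    rcases Nat.even_or_odd n with h | h
    · have h2 : n % 2 = 0 := Nat.even_iff.mp h
      simp [h2, Nat.succ_mod_two_eq_one_iff.mpr h2]
    · have h2 : n % 2 = 1 := Nat.odd_iff.mp h
      simp [h2, Nat.succ_mod_two_eq_zero_iff.mpr h2, Smat_sq]

lemma Dmat_pow (a : ℕ) : Dmat ^ a = if a % 2 = 0 then 1 else Dmat := by
  induction a with
  | zero => simp
  | succ n ih =>
    rw [pow_succ, ih]
    rcases Nat.even_or_odd n with h | h
    · have h2 : n % 2 = 0 := Nat.even_iff.mp h
      simp [h2, Nat.succ_mod_two_eq_one_iff.mpr h2]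
    · have h2 : n % 2 = 1 := Nat.odd_iff.mp h
      simp [h2, Nat.succ_mod_two_eq_zero_iff.mpr h2, Dmat_sq]

noncomputable def rhoFree : FreeAlgebra ℤ (Fin 2) →ₐ[ℤ] M2 :=
  FreeAlgebra.lift ℤ (fun i => if i = 0 then Xmat else Ymat)

lemma rhoFree_rel : ∀ ⦃x y : FreeAlgebra ℤ (Fin 2)⦄, negRel x y → rhoFree x = rhoFree y := by
  rintro x y ⟨rfl, rfl⟩
  unfold rhoFree
  simp only [map_add, map_mul, map_zero, FreeAlgebra.lift_ι_apply]
  norm_num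
  exact anti

noncomputable def rho : NegPoly →ₐ[ℤ] M2 :=
  RingQuot.liftAlgHom ℤ ⟨rhoFree, rhoFree_rel⟩

lemma rho_pi (w : FreeAlgebra ℤ (Fin 2)) : rho (piA w) = rhoFree w :=
  RingQuot.liftAlgHom_mkAlgHom_apply ℤ rhoFree rhoFree_rel w

lemma rho_Xg : rho Xg = Xmat := by
  rw [Xg, rho_pi]; unfold rhoFree; simp [FreeAlgebra.lift_ι_apply]

lemma rho_Yg : rho Yg = Ymat := by
  rw [Yg, rho_pi]; unfold rhoFree; simp [FreeAlgebra.lift_ι_apply]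

lemma rho_mon (a b : ℕ) :
    rho (mon a b) = ((X (0:Fin 2) : R2) ^ a * (X (1:Fin 2) : R2) ^ b) • (Smat ^ a * Dmat ^ b) := by
  unfold mon
  rw [map_mul, map_pow, map_pow, rho_Xg, rho_Yg]
  unfold Xmat Ymat
  rw [smul_pow, smul_pow, Matrix.smul_mul, Matrix.mul_smul, smul_smul]

noncomputable def eD (i j : ℕ) : Fin 2 →₀ ℕ := Finsupp.single 0 i + Finsupp.single 1 j

def p1 (i j : ℕ) : Fin 2 := if i % 2 = 1 ∧ j % 2 = 1 then 1 else 0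
def p2 (i j : ℕ) : Fin 2 := if i % 2 = 1 ∧ j % 2 = 0 then 1 else 0

lemma eD_inj {a b i j : ℕ} (h : eD a b = eD i j) : a = i ∧ b = j := by
  have h0 := DFunLike.congr_fun h (0 : Fin 2)
  have h1 := DFunLike.congr_fun h (1 : Fin 2)
  simp [eD, Finsupp.add_apply, Finsupp.single_apply] at h0 h1
  exact ⟨h0, h1⟩

lemma prod_eq (a b : ℕ) :
    (X (0:Fin 2) : R2) ^ a * (X (1:Fin 2) : R2) ^ b = monomial (eD a b) 1 := by
  rw [X_pow_eq_monomial, X_pow_eq_monomial, monomial_mul, one_mul]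
  rfl

lemma entry_const (a b : ℕ) (p q : Fin 2) : ∃ z : ℤ, (Smat ^ a * Dmat ^ b) p q = C z := by
  rw [Smat_pow, Dmat_pow]
  split_ifs <;> fin_cases p <;> fin_cases q <;>
    first
      | (refine ⟨0, ?_⟩; simp [Matrix.one_apply, Matrix.mul_apply, Fin.sum_univ_two, Smat, Dmat]; done)
      | (refine ⟨1, ?_⟩; simp [Matrix.one_apply, Matrix.mul_apply, Fin.sum_univ_two, Smat, Dmat]; done)
      | (refine ⟨-1, ?_⟩; simp [Matrix.one_apply, Matrix.mul_apply, Fin.sum_univ_two, Smat, Dmat]; done)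

noncomputable def phi (i j : ℕ) : NegPoly →ₗ[ℤ] ℤ where
  toFun z := coeff (eD i j) ((rho z) (p1 i j) (p2 i j))
  map_add' a b := by simp [map_add, Matrix.add_apply, coeff_add]
  map_smul' n a := by
    have h : rho (n • a) = n • rho a := map_smul rho.toLinearMap n a
    simp only [h, Matrix.smul_apply, MvPolynomial.coeff_smul, RingHom.id_apply]

lemma phi_mon (i j a b : ℕ) : phi i j (mon a b) = if a = i ∧ b = j then 1 else 0 := by
  show coeff (eD i j) ((rho (mon a b)) (p1 i j) (p2 i j)) = _
  rw [rho_mon, prod_eq]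
  by_cases hab : a = i ∧ b = j
  · obtain ⟨rfl, rfl⟩ := hab
    simp only [if_pos (⟨rfl, rfl⟩ : a = a ∧ b = b)]
    have hentry : (Smat ^ a * Dmat ^ b) (p1 a b) (p2 a b) = 1 := by
      rw [Smat_pow, Dmat_pow]
      rcases Nat.even_or_odd a with ha | ha <;> rcases Nat.even_or_odd b with hb | hb
      · have ha' := Nat.even_iff.mp ha; have hb' := Nat.even_iff.mp hb
        simp [p1, p2, ha', hb', Matrix.one_apply]
      · have ha' := Nat.even_iff.mp ha; have hb' := Nat.odd_iff.mp hb
        simp [p1, p2, ha', hb', Dmat]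
      · have ha' := Nat.odd_iff.mp ha; have hb' := Nat.even_iff.mp hb
        simp [p1, p2, ha', hb', Smat]
      · have ha' := Nat.odd_iff.mp ha; have hb' := Nat.odd_iff.mp hb
        simp [p1, p2, ha', hb', Smat, Dmat, Matrix.mul_apply, Fin.sum_univ_two]
    rw [Matrix.smul_apply, hentry, smul_eq_mul, mul_one, coeff_monomial, if_pos rfl]
    simp
  · rw [if_neg hab]
    obtain ⟨z, hz⟩ := entry_const a b (p1 i j) (p2 i j)
    rw [Matrix.smul_apply, hz, smul_eq_mul]
    have hm : (monomial (eD a b)) (1:ℤ) * C z = monomial (eD a b) z := by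
      rw [C_apply, monomial_mul, add_zero, one_mul]
    rw [hm, coeff_monomial, if_neg (fun h => hab (eD_inj h))]

-- ## Section 3: spanning by monomials

noncomputable def monSet : Set NegPoly := {z | ∃ a b : ℕ, z = mon a b}

lemma mon_zero_zero : mon 0 0 = 1 := by simp [mon]
lemma mon_X : mon 1 0 = Xg := by simp [mon]
lemma mon_Y : mon 0 1 = Yg := by simp [mon]

lemma mul_mem_monSpan {z1 z2 : NegPoly} (h1 : z1 ∈ Submodule.span ℤ monSet)
    (h2 : z2 ∈ Submodule.span ℤ monSet) : z1 * z2 ∈ Submodule.span ℤ monSet := by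
  induction h1 using Submodule.span_induction with
  | mem x hx =>
    obtain ⟨a, b, rfl⟩ := hx
    induction h2 using Submodule.span_induction with
    | mem y hy =>
      obtain ⟨c, d, rfl⟩ := hy
      rw [mon_mul]
      exact Submodule.smul_mem _ _ (Submodule.subset_span ⟨_, _, rfl⟩)
    | zero => simp
    | add y z hy hz hy' hz' => rw [mul_add]; exact add_mem hy' hz'
    | smul n y hy hy' => rw [mul_smul_comm]; exact Submodule.smul_mem _ _ hy'
  | zero => simp
  | add x y hx hy hx' hy' => rw [add_mul]; exact add_mem hx' hy'
  | smul n x hx hx' => rw [smul_mul_assoc]; exact Submodule.smul_mem _ _ hx'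

lemma monSpan_top (z : NegPoly) : z ∈ Submodule.span ℤ monSet := by
  obtain ⟨w, rfl⟩ := RingQuot.mkAlgHom_surjective ℤ negRel z
  refine FreeAlgebra.induction ℤ (Fin 2)
    (motive := fun w => piA w ∈ Submodule.span ℤ monSet) ?_ ?_ ?_ ?_ w
  · intro r
    rw [AlgHom.commutes, Algebra.algebraMap_eq_smul_one, ← mon_zero_zero]
    exact Submodule.smul_mem _ _ (Submodule.subset_span ⟨0, 0, rfl⟩)
  · intro x
    fin_cases x
    · exact Submodule.subset_span ⟨1, 0, mon_X.symm⟩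
    · exact Submodule.subset_span ⟨0, 1, mon_Y.symm⟩
  · intro a b ha hb
    rw [map_mul]
    exact mul_mem_monSpan ha hb
  · intro a b ha hb
    rw [map_add]
    exact add_mem ha hb

-- ## nDeg characterization

lemma Yg_mon (i j : ℕ) : Yg * mon i j = ((-1:ℤ)^i) • mon i (j+1) := by
  unfold mon
  calc Yg * (Xg ^ i * Yg ^ j) = (Yg ^ 1 * Xg ^ i) * Yg ^ j := by rw [pow_one, mul_assoc]
  _ = (((-1:ℤ)^(i*1)) • (Xg ^ i * Yg ^ 1)) * Yg ^ j := by rw [ypow_xpow]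
  _ = ((-1:ℤ)^i) • (Xg ^ i * Yg ^ (j+1)) := by
      rw [smul_mul_assoc, mul_assoc, mul_one, pow_one, ← pow_succ']

lemma Xg_mon (i j : ℕ) : Xg * mon i j = mon (i+1) j := by
  unfold mon
  rw [← mul_assoc, ← pow_succ']

lemma word_image (w : List (Fin 2)) :
    ∃ ε : ℤ, (ε = 1 ∨ ε = -1) ∧
      piA ((w.map (ι ℤ)).prod) = ε • mon (w.count (0 : Fin 2)) (w.count (1 : Fin 2)) := by
  induction w with
  | nil => exact ⟨1, Or.inl rfl, by simp [mon_zero_zero]⟩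
  | cons a w ih =>
    obtain ⟨ε, hε, hw⟩ := ih
    rw [List.map_cons, List.prod_cons, map_mul, hw]
    fin_cases a <;> simp only [Fin.zero_eta, Fin.mk_one, Fin.isValue]
    · refine ⟨ε, hε, ?_⟩
      have hx : piA (ι ℤ (0 : Fin 2)) = Xg := rfl
      rw [hx, mul_smul_comm, Xg_mon]
      have hc0 : List.count (0 : Fin 2) ((0 : Fin 2) :: w) = List.count (0 : Fin 2) w + 1 :=
        List.count_cons_self
      have hc1 : List.count (1 : Fin 2) ((0 : Fin 2) :: w) = List.count (1 : Fin 2) w := by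
        rw [List.count_cons]; simp
      rw [hc0, hc1]
    · refine ⟨ε * (-1:ℤ)^(w.count (0 : Fin 2)), ?_, ?_⟩
      · rcases Nat.even_or_odd (w.count (0 : Fin 2)) with h | h
        · rw [h.neg_one_pow]; rcases hε with h' | h' <;> simp [h']
        · rw [h.neg_one_pow]; rcases hε with h' | h' <;> simp [h']
      · have hy : piA (ι ℤ (1 : Fin 2)) = Yg := rfl
        rw [hy, mul_smul_comm, Yg_mon, smul_smul]
        have hc0 : List.count (0 : Fin 2) ((1 : Fin 2) :: w) = List.count (0 : Fin 2) w := by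
          rw [List.count_cons]; simp
        have hc1 : List.count (1 : Fin 2) ((1 : Fin 2) :: w) = List.count (1 : Fin 2) w + 1 :=
          List.count_cons_self
        rw [hc0, hc1]

lemma mon_mem_nDeg (i j : ℕ) : mon i j ∈ nDeg i j := by
  refine ⟨((List.replicate i (0 : Fin 2) ++ List.replicate j (1 : Fin 2)).map (ι ℤ)).prod,
    Submodule.subset_span ⟨_, ?_, ?_, rfl⟩, ?_⟩
  · rw [List.count_append, List.count_replicate, List.count_replicate]; simp
  · rw [List.count_append, List.count_replicate, List.count_replicate]; simp
  · show piA _ = mon i j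
    rw [List.map_append, List.prod_append, List.map_replicate, List.map_replicate,
      List.prod_replicate, List.prod_replicate, map_mul, map_pow, map_pow]
    rfl

lemma nDeg_eq (i j : ℕ) : nDeg i j = Submodule.span ℤ {mon i j} := by
  apply le_antisymm
  · erw [nDeg, freeDeg, Submodule.map_span, Submodule.span_le]
    rintro z ⟨x, ⟨w, hc0, hc1, rfl⟩, rfl⟩
    obtain ⟨ε, hε, hw⟩ := word_image w
    show piA _ ∈ _
    rw [hw, hc0, hc1]
    exact Submodule.smul_mem _ _ (Submodule.subset_span rfl)
  · rw [Submodule.span_le]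
    rintro z hz
    rw [Set.mem_singleton_iff] at hz
    subst hz
    exact mon_mem_nDeg i j

-- ## Parity and combinatorics

def valid (k i j : ℕ) : Prop := 0 < i ∧ 0 < j ∧ k ≤ i + j ∧ ¬(Even i ∧ Even j)

noncomputable def Ssub (k : ℕ) : Submodule ℤ NegPoly :=
  Submodule.span ℤ {z | ∃ i j, valid k i j ∧ z = (2:ℤ)^(k-1) • mon i j}

lemma sign0 {a b c d : ℕ} (h : Even (a*d + b*c)) :
    ((-1:ℤ)^(b*c) - (-1:ℤ)^(a*d)) = 0 := by
  rcases Nat.even_or_odd (a*d) with h1 | h1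
  · have h2 : Even (b*c) := (Nat.even_add.mp h).mp h1
    rw [h1.neg_one_pow, h2.neg_one_pow]; ring
  · have h2 : Odd (b*c) := by
      rw [← Nat.not_even_iff_odd]
      intro he
      exact (Nat.not_odd_iff_even.mpr ((Nat.even_add.mp h).mpr he)) h1
    rw [h1.neg_one_pow, h2.neg_one_pow]; ring

lemma sign2 {a b c d : ℕ} (h : Odd (a*d + b*c)) :
    ((-1:ℤ)^(b*c) - (-1:ℤ)^(a*d)) = 2 ∨ ((-1:ℤ)^(b*c) - (-1:ℤ)^(a*d)) = -2 := by
  rcases Nat.even_or_odd (a*d) with h1 | h1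
  · have h2 : Odd (b*c) := by
      rw [← Nat.not_even_iff_odd]
      intro he
      exact (Nat.not_odd_iff_even.mpr h1) ((Nat.odd_add.mp h).mpr he)
    right; rw [h1.neg_one_pow, h2.neg_one_pow]; ring
  · have h2 : Even (b*c) := (Nat.odd_add.mp h).mp h1
    left; rw [h1.neg_one_pow, h2.neg_one_pow]; ring

lemma par1 {a b c d : ℕ} (h : Odd (a*d + b*c)) : valid 2 (a+c) (b+d) := by
  have h' := Nat.odd_add.mp h
  rw [Nat.odd_mul, Nat.even_mul] at h'
  unfold valid
  simp only [Nat.odd_iff, Nat.even_iff] at h' ⊢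
  omega

lemma par2 {k a b c d : ℕ} (h : Odd (a*d + b*c)) (hv : valid k c d) :
    valid (k+1) (a+c) (b+d) := by
  obtain ⟨h1, h2, h3, h4⟩ := hv
  have h' := Nat.odd_add.mp h
  rw [Nat.odd_mul, Nat.even_mul] at h'
  unfold valid
  simp only [Nat.odd_iff, Nat.even_iff] at h' h4 ⊢
  omega

lemma exist2 {i j : ℕ} (h : valid 2 i j) :
    ∃ a b c d, a + c = i ∧ b + d = j ∧ Odd (a*d + b*c) := by
  obtain ⟨hi, hj, -, hp⟩ := h
  rcases Nat.even_or_odd i with he | ho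
  · have hjo : Odd j := by
      rcases Nat.even_or_odd j with h' | h'
      · exact absurd ⟨he, h'⟩ hp
      · exact h'
    exact ⟨1, 0, i-1, j, by omega, by omega, by simpa using hjo⟩
  · exact ⟨i, j-1, 0, 1, by omega, by omega, by simpa using ho⟩

lemma existS {k i j : ℕ} (hk : 2 ≤ k) (h : valid (k+1) i j) :
    ∃ a b c d, a + c = i ∧ b + d = j ∧ Odd (a*d + b*c) ∧ valid k c d := by
  obtain ⟨hi, hj, hs, hp⟩ := h
  rcases Nat.even_or_odd j with hje | hjo
  · have hio : Odd i := by
      rcases Nat.even_or_odd i with h' | h'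
      · exact absurd ⟨h', hje⟩ hp
      · exact h'
    have hj2 : 2 ≤ j := by rw [Nat.even_iff] at hje; omega
    refine ⟨0, 1, i, j-1, by omega, by omega, by simpa using hio, hi, by omega, by omega, ?_⟩
    rintro ⟨h1, -⟩; exact (Nat.not_odd_iff_even.mpr h1) hio
  · rcases Nat.even_or_odd i with hie | hio
    · have hi2 : 2 ≤ i := by rw [Nat.even_iff] at hie; omega
      refine ⟨1, 0, i-1, j, by omega, by omega, by simpa using hjo, by omega, hj, by omega, ?_⟩
      rintro ⟨-, h2⟩; exact (Nat.not_odd_iff_even.mpr h2) hjo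
    · by_cases hi2 : 2 ≤ i
      · refine ⟨1, 0, i-1, j, by omega, by omega, by simpa using hjo, by omega, hj, by omega, ?_⟩
        rintro ⟨-, h2⟩; exact (Nat.not_odd_iff_even.mpr h2) hjo
      · have hj2 : 2 ≤ j := by omega
        refine ⟨0, 1, i, j-1, by omega, by omega, by simpa using hio, hi, by omega, by omega, ?_⟩
        rintro ⟨h1, -⟩; exact (Nat.not_odd_iff_even.mpr h1) hio

-- ## lcs = Ssub

lemma comm_addl (u u' v : NegPoly) :
    (u+u')*v - v*(u+u') = (u*v - v*u) + (u'*v - v*u') := by noncomm_ring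
lemma comm_smull (n : ℤ) (u v : NegPoly) :
    (n•u)*v - v*(n•u) = n • (u*v - v*u) := by
  rw [smul_mul_assoc, mul_smul_comm, smul_sub]
lemma comm_addr (u v v' : NegPoly) :
    u*(v+v') - (v+v')*u = (u*v - v*u) + (u*v' - v'*u) := by noncomm_ring
lemma comm_smulr (n : ℤ) (u v : NegPoly) :
    u*(n•v) - (n•v)*u = n • (u*v - v*u) := by
  rw [mul_smul_comm, smul_mul_assoc, smul_sub]

lemma comm_mem_S2 (a l : NegPoly) : a * l - l * a ∈ Ssub 2 := by
  have ha := monSpan_top a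
  induction ha using Submodule.span_induction with
  | mem x hx =>
    obtain ⟨p, q, rfl⟩ := hx
    have hl := monSpan_top l
    induction hl using Submodule.span_induction with
    | mem y hy =>
      obtain ⟨c, d, rfl⟩ := hy
      rw [mon_comm]
      rcases Nat.even_or_odd (p*d + q*c) with he | ho
      · rw [sign0 he, zero_smul]; exact zero_mem _
      · have hv := par1 ho
        rcases sign2 ho with h2 | h2
        · rw [h2, show (2:ℤ) = (2:ℤ)^(2-1) by norm_num]
          exact Submodule.subset_span ⟨_, _, hv, rfl⟩
        · rw [h2, show ((-2:ℤ) • mon (p+c) (q+d)) = -((2:ℤ)^(2-1) • mon (p+c) (q+d)) by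
            rw [← neg_smul]; norm_num]
          exact neg_mem (Submodule.subset_span ⟨_, _, hv, rfl⟩)
    | zero => simp
    | add y z hy hz ihy ihz =>
      rw [show mon p q * (y+z) - (y+z) * mon p q
        = (mon p q * y - y * mon p q) + (mon p q * z - z * mon p q) by noncomm_ring]
      exact add_mem ihy ihz
    | smul n y hy ihy =>
      rw [show mon p q * (n • y) - (n • y) * mon p q = n • (mon p q * y - y * mon p q) by
        rw [mul_smul_comm, smul_mul_assoc, smul_sub]]
      exact Submodule.smul_mem _ _ ihy
  | zero => simp
  | add x y hx hy ihx ihy =>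
    rw [show (x+y) * l - l * (x+y) = (x*l - l*x) + (y*l - l*y) by noncomm_ring]
    exact add_mem ihx ihy
  | smul n x hx ihx =>
    rw [show (n • x) * l - l * (n • x) = n • (x*l - l*x) by
      rw [mul_smul_comm, smul_mul_assoc, smul_sub]]
    exact Submodule.smul_mem _ _ ihx

lemma comm_mem_step {k : ℕ} (hk : 2 ≤ k) (a l : NegPoly) (hl : l ∈ Ssub k) :
    a * l - l * a ∈ Ssub (k+1) := by
  induction hl using Submodule.span_induction with
  | mem y hy =>
    obtain ⟨c, d, hv, rfl⟩ := hy
    have ha := monSpan_top a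
    induction ha using Submodule.span_induction with
    | mem x hx =>
      obtain ⟨p, q, rfl⟩ := hx
      rw [show mon p q * ((2:ℤ)^(k-1) • mon c d) - ((2:ℤ)^(k-1) • mon c d) * mon p q
          = (2:ℤ)^(k-1) • (mon p q * mon c d - mon c d * mon p q) by
        rw [mul_smul_comm, smul_mul_assoc, smul_sub]]
      rw [mon_comm, smul_smul]
      rcases Nat.even_or_odd (p*d + q*c) with he | ho
      · rw [sign0 he]; simp
      · have hv2 := par2 ho hv
        rcases sign2 ho with h2 | h2
        · rw [h2, show (2:ℤ)^(k-1) * 2 = (2:ℤ)^(k+1-1) by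
            rw [← pow_succ]; congr 1; omega]
          exact Submodule.subset_span ⟨_, _, hv2, rfl⟩
        · rw [h2, show ((2:ℤ)^(k-1) * -2) • mon (p+c) (q+d)
              = -((2:ℤ)^(k+1-1) • mon (p+c) (q+d)) by
            rw [← neg_smul]; congr 1
            rw [mul_neg, ← pow_succ]
            congr 2; omega]
          exact neg_mem (Submodule.subset_span ⟨_, _, hv2, rfl⟩)
    | zero => simp
    | add x y hx hy ihx ihy =>
      rw [comm_addl x y ((2:ℤ)^(k-1) • mon c d)]
      exact add_mem ihx ihy
    | smul n x hx ihx =>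
      rw [comm_smull n x ((2:ℤ)^(k-1) • mon c d)]
      exact Submodule.smul_mem _ _ ihx
  | zero => simp
  | add y z hy hz ihy ihz =>
    rw [show a * (y+z) - (y+z) * a = (a*y - y*a) + (a*z - z*a) by noncomm_ring]
    exact add_mem ihy ihz
  | smul n y hy ihy =>
    rw [show a * (n • y) - (n • y) * a = n • (a*y - y*a) by
      rw [mul_smul_comm, smul_mul_assoc, smul_sub]]
    exact Submodule.smul_mem _ _ ihy

lemma lcs_succ_eq (k : ℕ) (hk : 1 ≤ k) :
    lcs (k+1) = Submodule.span ℤ {x | ∃ a l, l ∈ lcs k ∧ x = a * l - l * a} := by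
  obtain ⟨m, rfl⟩ : ∃ m, k = m + 1 := ⟨k-1, by omega⟩
  rfl

lemma lcs_eq (k : ℕ) (hk : 2 ≤ k) : lcs k = Ssub k := by
  induction k, hk using Nat.le_induction with
  | base =>
    have hdef : lcs 2 = Submodule.span ℤ {x | ∃ a l, l ∈ lcs 1 ∧ x = a * l - l * a} := rfl
    apply le_antisymm
    · rw [hdef, Submodule.span_le]
      rintro x ⟨a, l, -, rfl⟩
      exact comm_mem_S2 a l
    · rw [Ssub, Submodule.span_le]
      rintro z ⟨i, j, hv, rfl⟩
      obtain ⟨a, b, c, d, h1, h2, hodd⟩ := exist2 hv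
      subst h1; subst h2
      rw [hdef]
      rcases sign2 hodd with hs | hs
      · rw [show (2:ℤ)^(2-1) • mon (a+c) (b+d) = mon a b * mon c d - mon c d * mon a b by
          rw [mon_comm, hs]; norm_num]
        exact Submodule.subset_span ⟨mon a b, mon c d, Submodule.mem_top, rfl⟩
      · rw [show (2:ℤ)^(2-1) • mon (a+c) (b+d)
            = -(mon a b * mon c d - mon c d * mon a b) by
          rw [mon_comm, hs, ← neg_smul]; norm_num]
        exact neg_mem (Submodule.subset_span ⟨mon a b, mon c d, Submodule.mem_top, rfl⟩)
  | succ k hk ih =>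
    rw [lcs_succ_eq k (by omega)]
    apply le_antisymm
    · rw [Submodule.span_le]
      rintro x ⟨a, l, hl, rfl⟩
      rw [ih] at hl
      exact comm_mem_step hk a l hl
    · rw [Ssub, Submodule.span_le]
      rintro z ⟨i, j, hv, rfl⟩
      obtain ⟨a, b, c, d, h1, h2, hodd, hvcd⟩ := existS hk hv
      subst h1; subst h2
      have hlmem : (2:ℤ)^(k-1) • mon c d ∈ lcs k :=
        ih ▸ Submodule.subset_span ⟨c, d, hvcd, rfl⟩
      have hcomm : mon a b * ((2:ℤ)^(k-1) • mon c d) - ((2:ℤ)^(k-1) • mon c d) * mon a b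
          = ((2:ℤ)^(k-1) * ((-1:ℤ)^(b*c) - (-1:ℤ)^(a*d))) • mon (a+c) (b+d) := by
        rw [mul_smul_comm, smul_mul_assoc, ← smul_sub, mon_comm, smul_smul]
      rcases sign2 hodd with hs | hs
      · rw [show (2:ℤ)^(k+1-1) • mon (a+c) (b+d)
            = mon a b * ((2:ℤ)^(k-1) • mon c d) - ((2:ℤ)^(k-1) • mon c d) * mon a b by
          rw [hcomm, hs, ← pow_succ]; congr 2; omega]
        exact Submodule.subset_span ⟨mon a b, _, hlmem, rfl⟩
      · rw [show (2:ℤ)^(k+1-1) • mon (a+c) (b+d)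
            = -(mon a b * ((2:ℤ)^(k-1) • mon c d) - ((2:ℤ)^(k-1) • mon c d) * mon a b) by
          rw [hcomm, hs, ← neg_smul]; rw [mul_neg, neg_neg, ← pow_succ]; congr 2; omega]
        exact neg_mem (Submodule.subset_span ⟨mon a b, _, hlmem, rfl⟩)

-- ## phi consequences

lemma phi_self (i j : ℕ) (n : ℤ) : phi i j (n • mon i j) = n := by
  rw [map_smul, phi_mon]
  simp

lemma phi_Ssub_dvd {k i j : ℕ} {z : NegPoly} (hz : z ∈ Ssub k) :
    (2:ℤ)^(k-1) ∣ phi i j z := by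
  have hle : Ssub k ≤ Submodule.comap (phi i j) (Ideal.span {(2:ℤ)^(k-1)}) := by
    rw [Ssub, Submodule.span_le]
    rintro w ⟨c, d, hv, rfl⟩
    simp only [Submodule.mem_comap, map_smul, phi_mon, SetLike.mem_coe,
      Ideal.mem_span_singleton, smul_eq_mul]
    exact Dvd.intro _ rfl
  exact Ideal.mem_span_singleton.mp (hle hz)

lemma phi_Ssub_zero {k i j : ℕ} (hnv : ¬ valid k i j) {z : NegPoly} (hz : z ∈ Ssub k) :
    phi i j z = 0 := by
  have hle : Ssub k ≤ LinearMap.ker (phi i j) := by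
    rw [Ssub, Submodule.span_le]
    rintro w ⟨c, d, hv, rfl⟩
    simp only [SetLike.mem_coe, LinearMap.mem_ker, map_smul, phi_mon, smul_eq_mul]
    rcases eq_or_ne (c, d) (i, j) with he | hne
    · obtain ⟨rfl, rfl⟩ := Prod.mk.injEq .. ▸ he
      exact absurd hv hnv
    · rw [if_neg, mul_zero]
      rintro ⟨rfl, rfl⟩
      exact hne rfl
  exact hle hz

lemma mon_torsionfree (i j : ℕ) {n : ℤ} (h : n • mon i j = 0) : n = 0 := by
  have := congrArg (phi i j) h
  rw [phi_self, map_zero] at this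
  exact this

lemma inf_eq_bot {k i j : ℕ} (hk : 2 ≤ k) (hnv : ¬ valid k i j) :
    lcs k ⊓ nDeg i j = ⊥ := by
  rw [lcs_eq k hk, nDeg_eq, eq_bot_iff]
  rintro z ⟨hz1, hz2⟩
  obtain ⟨n, rfl⟩ := Submodule.mem_span_singleton.mp hz2
  have h0 := phi_Ssub_zero hnv hz1
  rw [phi_self] at h0
  subst h0
  simp

lemma inf_eq_span {k i j : ℕ} (hk : 2 ≤ k) (hv : valid k i j) :
    lcs k ⊓ nDeg i j = Submodule.span ℤ {(2:ℤ)^(k-1) • mon i j} := by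
  rw [lcs_eq k hk, nDeg_eq]
  apply le_antisymm
  · rintro z ⟨hz1, hz2⟩
    obtain ⟨n, rfl⟩ := Submodule.mem_span_singleton.mp hz2
    obtain ⟨m, hm⟩ := phi_Ssub_dvd (i := i) (j := j) hz1
    rw [phi_self] at hm
    subst hm
    rw [Submodule.mem_span_singleton]
    exact ⟨m, by rw [smul_smul, mul_comm]⟩
  · rw [Submodule.span_le]
    rintro z hz
    rw [Set.mem_singleton_iff] at hz
    subst hz
    exact ⟨Submodule.subset_span ⟨i, j, hv, rfl⟩,
      Submodule.smul_mem _ _ (Submodule.mem_span_singleton_self _)⟩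

-- ## Final assembly

lemma g_torsionfree (k i j : ℕ) {n : ℤ} (h : n • ((2:ℤ)^(k-1) • mon i j) = 0) : n = 0 := by
  rw [smul_smul] at h
  have h1 := mon_torsionfree i j h
  have h2 : (2:ℤ)^(k-1) ≠ 0 := pow_ne_zero _ two_ne_zero
  rcases mul_eq_zero.mp h1 with h | h
  · exact h
  · exact absurd h h2

lemma smul_g_phi (k i j : ℕ) (n : ℤ) :
    phi i j (n • ((2:ℤ)^(k-1) • mon i j)) = n * 2^(k-1) := by
  rw [smul_smul, phi_self]

noncomputable def eqvZN (k i j : ℕ) (hk : 2 ≤ k) (hv : valid k i j) :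
    ℤ ≃ₗ[ℤ] ↥(lcs k ⊓ nDeg i j) :=
  (LinearEquiv.ofInjective (LinearMap.toSpanSingleton ℤ NegPoly ((2:ℤ)^(k-1) • mon i j))
    (by
      intro n m h
      rw [LinearMap.toSpanSingleton_apply, LinearMap.toSpanSingleton_apply] at h
      refine sub_eq_zero.mp (g_torsionfree k i j (n := n - m) ?_)
      rw [sub_smul, h, sub_self])).trans
    (LinearEquiv.ofEq _ _ (by
      rw [← LinearMap.span_singleton_eq_range, inf_eq_span hk hv]))

lemma eqvZN_coe (k i j : ℕ) (hk : 2 ≤ k) (hv : valid k i j) (n : ℤ) :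
    ((eqvZN k i j hk hv n : ↥(lcs k ⊓ nDeg i j)) : NegPoly)
      = n • ((2:ℤ)^(k-1) • mon i j) := rfl

set_option maxHeartbeats 1000000 in
set_option synthInstance.maxHeartbeats 400000 in
/-- For `A = ℤ⟨x,y⟩/(yx + xy)` and `k ≥ 2`, the bigraded piece `B_k(A)[i,j]`
is `ℤ/2` if `i,j > 0`, `i+j > k` and `i,j` are not both even, `ℤ` if
`i,j > 0`, `i+j = k` and `i,j` are not both even, and `0` otherwise. -/
theorem stmt_16 (k i j : ℕ) (hk : 2 ≤ k) :
    (0 < i → 0 < j → k < i + j → ¬(Even i ∧ Even j) →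
      Nonempty (Bcomp k i j ≃+ ZMod 2)) ∧
    (0 < i → 0 < j → i + j = k → ¬(Even i ∧ Even j) →
      Nonempty (Bcomp k i j ≃+ ℤ)) ∧
    (¬(0 < i ∧ 0 < j ∧ k ≤ i + j ∧ ¬(Even i ∧ Even j)) →
      Subsingleton (Bcomp k i j)) := by
  refine ⟨?_, ?_, ?_⟩
  · -- ZMod 2 case
    intro hi hj hlt hp
    have hv : valid k i j := ⟨hi, hj, le_of_lt hlt, hp⟩
    have hv2 : valid (k+1) i j := ⟨hi, hj, hlt, hp⟩
    set e' := eqvZN k i j hk hv with he'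
    set K := Submodule.comap (lcs k ⊓ nDeg i j).subtype (lcs (k+1)) with hK
    set p := Submodule.comap (e' : ℤ →ₗ[ℤ] ↥(lcs k ⊓ nDeg i j)) K with hp'
    have hmem : ∀ n : ℤ, n ∈ p ↔ n • ((2:ℤ)^(k-1) • mon i j) ∈ lcs (k+1) := by
      intro n
      rw [hp', Submodule.mem_comap, hK, Submodule.mem_comap, Submodule.subtype_apply,
        LinearEquiv.coe_coe, he', eqvZN_coe]
    have e2 : (ℤ ⧸ p) ≃ₗ[ℤ] Bcomp k i j :=
      Submodule.Quotient.equiv p K e'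
        (by
          ext x
          rw [Submodule.mem_map]
          constructor
          · rintro ⟨y, hy, rfl⟩
            rw [hp', Submodule.mem_comap, LinearEquiv.coe_coe] at hy
            exact hy
          · intro hx
            refine ⟨e'.symm x, ?_, by simp⟩
            rw [hp', Submodule.mem_comap, LinearEquiv.coe_coe, e'.apply_symm_apply]
            exact hx)
    have hp2 : p = Ideal.span {((2:ℕ):ℤ)} := by
      ext n
      rw [hmem n, lcs_eq (k+1) (by omega), Ideal.mem_span_singleton]
      constructor
      · intro h
        obtain ⟨m, hm⟩ := phi_Ssub_dvd (i := i) (j := j) h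
        rw [smul_g_phi] at hm
        have hkk : ((k+1)-1) = (k-1) + 1 := by omega
        rw [hkk, pow_succ] at hm
        have hcan : n = 2 * m := by
          have h2 : (2:ℤ)^(k-1) ≠ 0 := pow_ne_zero _ two_ne_zero
          have : n * 2^(k-1) = (2 * m) * 2^(k-1) := by rw [hm]; ring
          exact mul_right_cancel₀ h2 this
        exact ⟨m, by rw [hcan]; norm_num⟩
      · rintro ⟨m, rfl⟩
        have : (((2:ℕ):ℤ) * m) • ((2:ℤ)^(k-1) • mon i j)
            = m • ((2:ℤ)^((k+1)-1) • mon i j) := by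
          rw [smul_smul, smul_smul]
          congr 1
          rw [show ((k+1)-1) = (k-1) + 1 from by omega, pow_succ]
          push_cast
          ring
        rw [this]
        exact Submodule.smul_mem _ _ (Submodule.subset_span ⟨i, j, hv2, rfl⟩)
    refine ⟨e2.symm.toAddEquiv.trans ?_⟩
    refine (Submodule.quotEquivOfEq p (Ideal.span {((2:ℕ):ℤ)}) hp2).toAddEquiv.trans ?_
    exact (Int.quotientSpanNatEquivZMod 2).toAddEquiv
  · -- ℤ case
    intro hi hj heq hp
    have hv : valid k i j := ⟨hi, hj, le_of_eq heq.symm, hp⟩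
    have hnv2 : ¬ valid (k+1) i j := by
      rintro ⟨-, -, hle, -⟩
      omega
    set e' := eqvZN k i j hk hv with he'
    set K := Submodule.comap (lcs k ⊓ nDeg i j).subtype (lcs (k+1)) with hK
    set p := Submodule.comap (e' : ℤ →ₗ[ℤ] ↥(lcs k ⊓ nDeg i j)) K with hp'
    have hmem : ∀ n : ℤ, n ∈ p ↔ n • ((2:ℤ)^(k-1) • mon i j) ∈ lcs (k+1) := by
      intro n
      rw [hp', Submodule.mem_comap, hK, Submodule.mem_comap, Submodule.subtype_apply,
        LinearEquiv.coe_coe, he', eqvZN_coe]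
    have e2 : (ℤ ⧸ p) ≃ₗ[ℤ] Bcomp k i j :=
      Submodule.Quotient.equiv p K e'
        (by
          ext x
          rw [Submodule.mem_map]
          constructor
          · rintro ⟨y, hy, rfl⟩
            rw [hp', Submodule.mem_comap, LinearEquiv.coe_coe] at hy
            exact hy
          · intro hx
            refine ⟨e'.symm x, ?_, by simp⟩
            rw [hp', Submodule.mem_comap, LinearEquiv.coe_coe, e'.apply_symm_apply]
            exact hx)
    have hpbot : p = ⊥ := by
      rw [eq_bot_iff]
      intro n hn
      rw [hmem n, lcs_eq (k+1) (by omega)] at hn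
      have h0 := phi_Ssub_zero hnv2 hn
      rw [smul_g_phi] at h0
      have h2 : (2:ℤ)^(k-1) ≠ 0 := pow_ne_zero _ two_ne_zero
      rcases mul_eq_zero.mp h0 with h | h
      · simpa using h
      · exact absurd h h2
    exact ⟨(e2.symm.trans (Submodule.quotEquivOfEqBot p hpbot)).toAddEquiv⟩
  · -- zero case
    intro h
    have hnv : ¬ valid k i j := h
    have hbot := inf_eq_bot hk hnv
    haveI : Subsingleton ↥(lcs k ⊓ nDeg i j) := by rw [hbot]; infer_instance
    refine ⟨fun x y => ?_⟩
    obtain ⟨x', rfl⟩ := Submodule.Quotient.mk_surjective _ x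
    obtain ⟨y', rfl⟩ := Submodule.Quotient.mk_surjective _ y
    rw [Subsingleton.elim x' y']
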